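/- arXiv:2205.02574 — 2 statements merged into one kernel-verified Lean document; each statement's English description precedes it below -/
import Mathlib

section
/- Let w be a nonempty binary word of length k with no factor 11. Then w starts with 0 if and only if 0 ≤ val_Fc(w) < F_{k−1}, and w starts with 1 if and only if −F_{k−2} ≤ val_Fc(w) < 0. -/
/-- Fibonacci sequence with F 0 = 1, F 1 = 2. -/
def F (n : ℕ) : ℕ := Nat.fib (n + 2)

/-- Fibonacci extended to integer indices ≥ -2, with F_{-2} = 0, F_{-1} = 1. -/
def Fz (m : ℤ) : ℤ := ((m + 2).toNat.fib : ℤ)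

/-- Fibonacci value of a word (most significant digit first):
`valF (w_{k-1} ⋯ w_0) = ∑ w_i F_i`. -/
def valF : List ℕ → ℕ
  | [] => 0
  | a :: t => a * F t.length + valF t

/-- Fibonacci's complement value:
`valFc (w_{k-1} ⋯ w_0) = ∑ w_i F_i − w_{k-1} F_k`. -/
def valFc (w : List ℕ) : ℤ :=
  (valF w : ℤ) - (w.headD 0 : ℤ) * (F w.length : ℤ)

lemma F_mono {m n : ℕ} (h : m ≤ n) : F m ≤ F n := Nat.fib_mono (by omega)

lemma F_add_two (n : ℕ) : F (n + 2) = F (n + 1) + F n := by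
  have h := Nat.fib_add_two (n := n + 2)
  have h2 : n + 2 + 1 = n + 1 + 2 := by omega
  rw [h2] at h
  simp only [F]
  omega

lemma valF_lt : ∀ w : List ℕ, (∀ x ∈ w, x ≤ 1) → ¬ [1,1] <:+: w → valF w < F w.length
  | [], _, _ => by simp [valF, F]
  | (0 :: t), hw, h11 => by
      have ht : valF t < F t.length :=
        valF_lt t (fun x hx => hw x (List.mem_cons_of_mem _ hx))
          (fun h => h11 (h.trans (List.suffix_cons 0 t).isInfix))
      simp only [valF, List.length_cons, Nat.zero_mul, Nat.zero_add]
      exact ht.trans_le (F_mono (Nat.le_succ _))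
  | (1 :: []), _, _ => by simp [valF, F]; decide
  | (1 :: 0 :: s), hw, h11 => by
      have hs : valF s < F s.length :=
        valF_lt s (fun x hx => hw x (by simp [hx]))
          (fun h => h11 (h.trans ((List.suffix_cons 0 s).isInfix.trans
            (List.suffix_cons 1 (0 :: s)).isInfix)))
      simp only [valF, List.length_cons, Nat.one_mul, Nat.zero_mul, Nat.zero_add]
      have h2 : F (s.length + 1 + 1) = F (s.length + 1) + F s.length := F_add_two s.length
      omega
  | (1 :: (b+2) :: s), hw, _ => by
      exact absurd (hw (b+2) (by simp)) (by omega)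
  | (1 :: 1 :: s), _, h11 => by
      exact absurd (List.IsPrefix.isInfix ⟨s, rfl⟩) h11
  | ((a+2) :: t), hw, _ => by
      exact absurd (hw (a+2) List.mem_cons_self) (by omega)

theorem valFc_sign_intervals (w : List ℕ) (hw : ∀ x ∈ w, x ≤ 1)
    (h11 : ¬ [1, 1] <:+: w) (k : ℕ) (hk : w.length = k) (hne : w ≠ []) :
    (w.headD 0 = 0 ↔ 0 ≤ valFc w ∧ valFc w < Fz ((k : ℤ) - 1)) ∧
    (w.headD 0 = 1 ↔ -Fz ((k : ℤ) - 2) ≤ valFc w ∧ valFc w < 0) := by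
  obtain ⟨a, t, rfl⟩ := List.exists_cons_of_ne_nil hne
  have hk' : t.length + 1 = k := by simpa using hk
  have ha : a ≤ 1 := hw a List.mem_cons_self
  have ht : valF t < F t.length :=
    valF_lt t (fun x hx => hw x (List.mem_cons_of_mem _ hx))
      (fun h => h11 (h.trans (List.suffix_cons a t).isInfix))
  have hFz1 : Fz ((k : ℤ) - 1) = (F t.length : ℤ) := by
    simp only [Fz, F]
    congr 2
    omega
  have hFz2 : Fz ((k : ℤ) - 2) = ((t.length + 1).fib : ℤ) := by
    simp only [Fz]
    congr 2
    omega
  interval_cases a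
  · have h0 : valFc (0 :: t) = (valF t : ℤ) := by simp [valFc, valF]
    have hin : 0 ≤ valFc (0 :: t) ∧ valFc (0 :: t) < Fz ((k : ℤ) - 1) := by
      rw [h0, hFz1]
      exact ⟨by positivity, by exact_mod_cast ht⟩
    refine ⟨⟨fun _ => hin, fun _ => rfl⟩, ⟨fun h => absurd h (by norm_num), fun ⟨h1, h2⟩ => ?_⟩⟩
    exact absurd h2 (not_lt.2 hin.1)
  · have hv1 : valFc (1 :: t) = (valF (1 :: t) : ℤ) - (F (t.length + 1) : ℤ) := by
      simp [valFc]
    have hwlt : valF (1 :: t) < F (t.length + 1) := by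
      simpa using valF_lt (1 :: t) hw h11
    have hge0 : F t.length ≤ valF (1 :: t) := by simp [valF]
    have hFrec : F (t.length + 1) = Nat.fib (t.length + 1) + F t.length := Nat.fib_add_two
    have hneg : valFc (1 :: t) < 0 := by rw [hv1]; omega
    have hge : -Fz ((k : ℤ) - 2) ≤ valFc (1 :: t) := by
      rw [hv1, hFz2]
      have h1 : (F (t.length + 1) : ℤ) = ((t.length + 1).fib : ℤ) + (F t.length : ℤ) := by
        exact_mod_cast hFrec
      have h2 : (F t.length : ℤ) ≤ (valF (1 :: t) : ℤ) := by exact_mod_cast hge0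
      omega
    exact ⟨⟨fun h => absurd h (by norm_num), fun ⟨h1, _⟩ => absurd hneg (not_lt.2 h1)⟩,
      ⟨fun _ => ⟨hge, hneg⟩, fun _ => rfl⟩⟩
end

section
/- Define a total order ≺ on binary words: u ≺ v iff (u starts with 1 and v starts with 0), or (both start with 0 and u <_rad v in radix order), or (both start with 1 and u <_rev v, where <_rev compares by longer length first, then lexicographically). Then val_Fc is an increasing bijection from (D, ≺) to (ℤ, <), where D = Σ(ΣΣ)* \ (Σ*11Σ* ∪ 000Σ* ∪ 101Σ*). -/
/-- The domain D of the Fibonacci's complement numeration system. -/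
def inD (w : List ℕ) : Prop :=
  (∀ x ∈ w, x ≤ 1) ∧ Odd w.length ∧ ¬ [1, 1] <:+: w ∧
    ¬ [0, 0, 0] <+: w ∧ ¬ [1, 0, 1] <+: w

/-- Radix order: shorter words first, ties broken lexicographically. -/
def radLt (u v : List ℕ) : Prop :=
  u.length < v.length ∨ (u.length = v.length ∧ List.Lex (· < ·) u v)

/-- Reverse-radix order: longer words first, ties broken lexicographically. -/
def revLt (u v : List ℕ) : Prop :=
  v.length < u.length ∨ (u.length = v.length ∧ List.Lex (· < ·) u v)

/-- The total order ≺. -/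
def precLt (u v : List ℕ) : Prop :=
  (u.headD 0 = 1 ∧ v.headD 0 = 0) ∨
  (u.headD 0 = 0 ∧ v.headD 0 = 0 ∧ radLt u v) ∨
  (u.headD 0 = 1 ∧ v.headD 0 = 1 ∧ revLt u v)

/-!
Here `fib` is Mathlib's Fibonacci sequence, so `F n = fib (n + 2)`. A word of `D` of length
`2m + 1` starting with `0` is `0t` with `t` a Zeckendorf word (no factor `11`) not starting with
`00`, and its value `valF t` lies in `[fib (2m), fib (2m + 2))`. One starting with `1` is `1t`
with `t` empty or starting with `00`, and its value `valF t - fib (2m + 1)` lies in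
`[-fib (2m + 1), -fib (2m - 1))`, where `fib (2m - 1)` is read as `0` when `m = 0`.
These blocks tile `ℤ` in the order `≺`, and inside a block `valFc` is the Zeckendorf value
shifted by a constant, hence lexicographically increasing and, by Zeckendorf's theorem, onto
the block. Injectivity follows because `≺` is total on `D`.
-/

open Nat (fib)

theorem exists_le_and_lt_succ {α : Type*} [LinearOrder α] {f : ℕ → α} {a : α} (h0 : f 0 ≤ a)
    (ha : ∃ k, a < f k) : ∃ m, f m ≤ a ∧ a < f (m + 1) := by
  by_contra! h
  obtain ⟨k, hk⟩ := ha
  exact hk.not_ge (Nat.rec h0 (fun m hm => h m hm) k)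

theorem lt_fib_add_two (n : ℕ) : n < fib (n + 2) := by
  have := Nat.le_fib_add_one (n + 2)
  omega

@[simp] theorem valF_nil : valF [] = 0 := rfl

@[simp] theorem valF_cons (a : ℕ) (t : List ℕ) :
    valF (a :: t) = a * fib (t.length + 2) + valF t :=
  rfl

theorem fib_length_add_one_le_valF_of_one_prefix {t : List ℕ} (h : [1] <+: t) :
    fib (t.length + 1) ≤ valF t := by
  obtain ⟨r, rfl⟩ := h
  simp

theorem fib_length_le_valF_of_zero_one_prefix {t : List ℕ} (h : [0, 1] <+: t) :
    fib t.length ≤ valF t := by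
  obtain ⟨r, rfl⟩ := h
  simp

def IsZeckendorf (w : List ℕ) : Prop := (∀ x ∈ w, x ≤ 1) ∧ ¬ [1, 1] <:+: w

theorem isZeckendorf_nil : IsZeckendorf [] := by simp [IsZeckendorf]

theorem isZeckendorf_cons_iff {a : ℕ} {t : List ℕ} :
    IsZeckendorf (a :: t) ↔ a ≤ 1 ∧ IsZeckendorf t ∧ ¬ (a = 1 ∧ [1] <+: t) := by
  simp only [IsZeckendorf, List.forall_mem_cons, List.infix_cons_iff, List.cons_prefix_cons]
  grind

theorem IsZeckendorf.of_cons {a : ℕ} {t : List ℕ} (h : IsZeckendorf (a :: t)) : IsZeckendorf t :=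
  (isZeckendorf_cons_iff.1 h).2.1

theorem IsZeckendorf.valF_lt : ∀ {t : List ℕ}, IsZeckendorf t → valF t < fib (t.length + 2)
  | [], _ => by simp
  | a :: t, h => by
    obtain ⟨ha, ht, h11⟩ := isZeckendorf_cons_iff.1 h
    obtain rfl | rfl : a = 0 ∨ a = 1 := by omega
    · simpa using ht.valF_lt.trans_le (Nat.fib_mono (by omega))
    · rcases t with _ | ⟨b, r⟩
      · simp [Nat.fib_add_two]
      obtain ⟨hb, hr, -⟩ := isZeckendorf_cons_iff.1 ht
      obtain rfl : b = 0 := by simp at h11; omega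
      have hfib := Nat.fib_add_two (n := r.length + 2)
      have hr' := hr.valF_lt
      simp only [valF_cons, List.length_cons]
      grind

theorem IsZeckendorf.valF_lt_fib_length_of_zero_zero_prefix {t : List ℕ} (ht : IsZeckendorf t)
    (h : [0, 0] <+: t) : valF t < fib t.length := by
  obtain ⟨r, rfl⟩ := h
  simpa using ht.of_cons.of_cons.valF_lt

theorem IsZeckendorf.fib_length_le_valF {t : List ℕ} (ht : IsZeckendorf t) (he : Even t.length)
    (h00 : ¬ [0, 0] <+: t) : fib t.length ≤ valF t := by
  rcases t with _ | ⟨a, _ | ⟨b, r⟩⟩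
  · simp
  · simp at he
  · obtain rfl | rfl : a = 0 ∨ a = 1 := by have := ht.1 a (by simp); omega
    · obtain rfl : b = 1 := by have := ht.1 b (by simp); simp at h00; omega
      exact fib_length_le_valF_of_zero_one_prefix (by simp)
    · exact (Nat.fib_mono (by omega)).trans (fib_length_add_one_le_valF_of_one_prefix (by simp))

theorem IsZeckendorf.valF_lt_fib_length {t : List ℕ} (ht : IsZeckendorf t) (hne : t ≠ [])
    (h1 : ¬ [1] <+: t) (h01 : ¬ [0, 1] <+: t) : valF t < fib t.length := by
  rcases t with _ | ⟨a, _ | ⟨b, r⟩⟩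
  · exact absurd rfl hne
  · have := ht.1 a (by simp)
    simp at h1 ⊢
    omega
  · have ha := ht.1 a (by simp)
    have hb := ht.1 b (by simp)
    simp only [List.cons_prefix_cons, List.nil_prefix, and_true] at h1 h01
    exact ht.valF_lt_fib_length_of_zero_zero_prefix (by simp; omega)

theorem valF_lt_valF_of_lex {u v : List ℕ} (h : List.Lex (· < ·) u v) (hu : IsZeckendorf u)
    (hlen : u.length = v.length) : valF u < valF v := by
  induction h with
  | nil => simp at hlen
  | @rel a s b t hab =>
    have hs := hu.of_cons.valF_lt
    have hlen' : s.length = t.length := by simpa using hlen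
    simp only [valF_cons, ← hlen']
    nlinarith
  | cons _ ih =>
    simp only [valF_cons, List.length_cons, Nat.add_right_cancel_iff] at hlen ⊢
    rw [hlen]
    exact Nat.add_lt_add_left (ih hu.of_cons hlen) _

theorem exists_isZeckendorf_valF_eq (k : ℕ) {n : ℕ} (hn : n < fib (k + 2)) :
    ∃ t, t.length = k ∧ IsZeckendorf t ∧ valF t = n := by
  induction k generalizing n with
  | zero =>
    obtain rfl : n = 0 := by simpa using hn
    exact ⟨[], rfl, isZeckendorf_nil, rfl⟩
  | succ k ih =>
    by_cases hlt : n < fib (k + 2)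
    · obtain ⟨t, hlen, ht, hval⟩ := ih hlt
      exact ⟨0 :: t, by simp [hlen], isZeckendorf_cons_iff.2 ⟨by omega, ht, by simp⟩,
        by simp [hval]⟩
    · have hfib := Nat.fib_add_two (n := k + 1)
      have hm : n - fib (k + 2) < fib (k + 1) := by grind
      obtain ⟨t, rfl, ht, hval⟩ := ih (hm.trans_le (Nat.fib_mono (by omega)))
      have h1 : ¬ [1] <+: t := fun h =>
        (fib_length_add_one_le_valF_of_one_prefix h).not_gt (hval ▸ hm)
      exact ⟨1 :: t, rfl, isZeckendorf_cons_iff.2 ⟨le_rfl, ht, fun h => h1 h.2⟩,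
        by simp [hval]; omega⟩

theorem inD_iff_isZeckendorf {w : List ℕ} :
    inD w ↔ IsZeckendorf w ∧ Odd w.length ∧ ¬ [0, 0, 0] <+: w ∧ ¬ [1, 0, 1] <+: w := by
  unfold inD IsZeckendorf
  tauto

theorem inD_zero_cons_iff {t : List ℕ} :
    inD (0 :: t) ↔ IsZeckendorf t ∧ Even t.length ∧ ¬ [0, 0] <+: t := by
  simp [inD_iff_isZeckendorf, isZeckendorf_cons_iff, Nat.odd_add_one]

theorem inD_one_cons_iff {t : List ℕ} :
    inD (1 :: t) ↔ IsZeckendorf t ∧ Even t.length ∧ ¬ [1] <+: t ∧ ¬ [0, 1] <+: t := by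
  simp [inD_iff_isZeckendorf, isZeckendorf_cons_iff, Nat.odd_add_one]
  tauto

theorem inD.headD_eq_zero_or_one {w : List ℕ} (hw : inD w) : w.headD 0 = 0 ∨ w.headD 0 = 1 := by
  rcases w with _ | ⟨a, t⟩
  · simp
  · have := hw.1 a (by simp)
    simp only [List.headD_cons]
    omega

theorem inD.length_add_two_le_of_length_lt {u v : List ℕ} (hu : inD u) (hv : inD v)
    (h : u.length < v.length) : u.length + 2 ≤ v.length := by
  obtain ⟨a, ha⟩ := hu.2.1
  obtain ⟨b, hb⟩ := hv.2.1
  omega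

theorem valFc_zero_cons (t : List ℕ) : valFc (0 :: t) = valF t := by
  simp [valFc]

theorem valFc_one_cons (t : List ℕ) : valFc (1 :: t) = valF t - fib (t.length + 1) := by
  simp [valFc, F, Nat.fib_add_two]
  ring

theorem valFc_mem_Ico_of_headD_eq_zero {w : List ℕ} (hw : inD w) (h0 : w.headD 0 = 0) :
    valFc w ∈ Set.Ico (fib (w.length - 1) : ℤ) (fib (w.length + 1)) := by
  rcases w with _ | ⟨a, t⟩
  · simp [inD] at hw
  obtain rfl : a = 0 := h0
  obtain ⟨ht, he, h00⟩ := inD_zero_cons_iff.1 hw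
  simp only [valFc_zero_cons, List.length_cons, Nat.add_sub_cancel, Set.mem_Ico, Nat.cast_le,
    Nat.cast_lt]
  exact ⟨ht.fib_length_le_valF he h00, ht.valF_lt⟩

theorem valFc_mem_Ico_of_headD_eq_one {w : List ℕ} (hw : inD w) (h1 : w.headD 0 = 1) :
    valFc w ∈ Set.Ico (-fib w.length : ℤ) (-fib (w.length - 2)) := by
  rcases w with _ | ⟨a, t⟩
  · simp at h1
  obtain rfl : a = 1 := h1
  obtain ⟨ht, he, h1, h01⟩ := inD_one_cons_iff.1 hw
  rw [valFc_one_cons]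
  rcases eq_or_ne t [] with rfl | hne
  · simp
  · have hlt := ht.valF_lt_fib_length hne h1 h01
    have hfib := Nat.fib_add_one (List.length_pos_of_ne_nil hne).ne'
    simp only [List.length_cons, Set.mem_Ico, show t.length + 1 - 2 = t.length - 1 by omega]
    omega

theorem valFc_lt_valFc_of_lex {u v : List ℕ} (h : List.Lex (· < ·) u v) (hu : IsZeckendorf u)
    (hlen : u.length = v.length) (hhead : u.headD 0 = v.headD 0) : valFc u < valFc v := by
  have := valF_lt_valF_of_lex h hu hlen
  simp only [valFc, hhead, hlen]
  omega

theorem valFc_lt_valFc_of_precLt {u v : List ℕ} (hu : inD u) (hv : inD v) (h : precLt u v) :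
    valFc u < valFc v := by
  have hzu := (inD_iff_isZeckendorf.1 hu).1
  rcases h with ⟨hu1, hv0⟩ | ⟨hu0, hv0, hlen | ⟨hlen, hlex⟩⟩ | ⟨hu1, hv1, hlen | ⟨hlen, hlex⟩⟩
  · have hu' := (valFc_mem_Ico_of_headD_eq_one hu hu1).2
    have hv' := (valFc_mem_Ico_of_headD_eq_zero hv hv0).1
    omega
  · have hu' := (valFc_mem_Ico_of_headD_eq_zero hu hu0).2
    have hv' := (valFc_mem_Ico_of_headD_eq_zero hv hv0).1
    have : fib (u.length + 1) ≤ fib (v.length - 1) :=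
      Nat.fib_mono (by have := hu.length_add_two_le_of_length_lt hv hlen; omega)
    omega
  · exact valFc_lt_valFc_of_lex hlex hzu hlen (hu0.trans hv0.symm)
  · have hu' := (valFc_mem_Ico_of_headD_eq_one hu hu1).2
    have hv' := (valFc_mem_Ico_of_headD_eq_one hv hv1).1
    have : fib v.length ≤ fib (u.length - 2) :=
      Nat.fib_mono (by have := hv.length_add_two_le_of_length_lt hu hlen; omega)
    omega
  · exact valFc_lt_valFc_of_lex hlex hzu hlen (hu1.trans hv1.symm)

theorem precLt_or_precLt_of_ne {u v : List ℕ} (hu : inD u) (hv : inD v) (hne : u ≠ v) :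
    precLt u v ∨ precLt v u := by
  have hlex : List.Lex (· < ·) u v ∨ List.Lex (· < ·) v u :=
    (trichotomous_of (List.Lex (· < ·)) u v).imp_right (·.resolve_left hne)
  have hlen := lt_trichotomy u.length v.length
  rcases hu.headD_eq_zero_or_one with hu' | hu' <;>
    rcases hv.headD_eq_zero_or_one with hv' | hv' <;>
    simp only [precLt, radLt, revLt, hu', hv'] <;> grind

theorem exists_inD_valFc_eq_natCast (n : ℕ) : ∃ w, inD w ∧ valFc w = n := by
  obtain ⟨m, hm, hm'⟩ := exists_le_and_lt_succ (f := fun m => fib (2 * m)) (a := n) (by simp)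
    ⟨n + 1, (lt_fib_add_two n).trans_le (Nat.fib_mono (by omega))⟩
  obtain ⟨t, hlen, ht, hval⟩ := exists_isZeckendorf_valF_eq (2 * m) hm'
  refine ⟨0 :: t, inD_zero_cons_iff.2 ⟨ht, hlen ▸ even_two_mul m, fun h00 => ?_⟩, by
    simp [valFc_zero_cons, hval]⟩
  have := ht.valF_lt_fib_length_of_zero_zero_prefix h00
  simp only [hlen, hval] at this
  omega

theorem exists_inD_valFc_eq_neg_succ (p : ℕ) : ∃ w, inD w ∧ valFc w = -(p + 1) := by
  obtain ⟨m, hm, hm'⟩ :=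
    exists_le_and_lt_succ (f := fun m => fib (2 * m - 1)) (a := p) (by simp)
    ⟨p + 2, (lt_fib_add_two p).trans_le (Nat.fib_mono (by omega))⟩
  simp only [show 2 * (m + 1) - 1 = 2 * m + 1 by omega] at hm'
  have hfib : fib (2 * m + 1) ≤ fib (2 * m + 2) := Nat.fib_mono (by omega)
  obtain ⟨t, hlen, ht, hval⟩ :=
    exists_isZeckendorf_valF_eq (2 * m) (n := fib (2 * m + 1) - (p + 1)) (by omega)
  refine ⟨1 :: t,
    inD_one_cons_iff.2 ⟨ht, hlen ▸ even_two_mul m, fun h1 => ?_, fun h01 => ?_⟩, ?_⟩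
  · have := fib_length_add_one_le_valF_of_one_prefix h1
    simp only [hlen, hval] at this
    omega
  · have h2 : 2 * m ≠ 0 := by have := h01.length_le; simp at this; omega
    have hle := fib_length_le_valF_of_zero_one_prefix h01
    have := Nat.fib_add_one h2
    simp only [hlen, hval] at hle
    omega
  · rw [valFc_one_cons, hlen, hval]
    omega

theorem exists_inD_valFc_eq (z : ℤ) : ∃ w, inD w ∧ valFc w = z := by
  cases z with
  | ofNat n => exact exists_inD_valFc_eq_natCast n
  | negSucc p => simpa [Int.negSucc_eq] using exists_inD_valFc_eq_neg_succ p

theorem valFc_increasing_bijection :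
    Set.BijOn valFc {w : List ℕ | inD w} Set.univ ∧
    ∀ u ∈ {w : List ℕ | inD w}, ∀ v ∈ {w : List ℕ | inD w},
      precLt u v → valFc u < valFc v := by
  refine ⟨⟨Set.mapsTo_univ _ _, fun u hu v hv huv => ?_, fun z _ => exists_inD_valFc_eq z⟩,
    fun u hu v hv => valFc_lt_valFc_of_precLt hu hv⟩
  by_contra hne
  rcases precLt_or_precLt_of_ne hu hv hne with h | h
  · exact (valFc_lt_valFc_of_precLt hu hv h).ne huv
  · exact (valFc_lt_valFc_of_precLt hv hu h).ne' huv
end
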